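/- arXiv:2210.12891 — 7 statements merged into one kernel-verified Lean document; each statement's English description precedes it below -/
import Mathlib

section
/- Suppose ρ, K, S : ℝ → ℝ are differentiable and L, d : ℝ → ℝ are continuous, with: ρ'(τ) = 0 for all τ (ρ is conserved along the world line); K(τ) > 0 for all τ; the density ρ/K is invariant, i.e. (ρ/K)'(τ) = −(ρ(τ)/K(τ))·d(τ) for all τ; and S'(τ) = L(τ) for all τ. Set Y = −S/ħ and define the wavefunction ψ(τ) = (ρ(τ)/(i·K(τ)))·e^{−i·Y(τ)}. Then ψ satisfies the relativistic quantum transfer equation: for all τ, i·ħ·ψ'(τ) = −L(τ)·ψ(τ) − i·ħ·d(τ)·ψ(τ). -/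
open Complex

/-- The relativistic quantum transfer equation (RQTE) for the
wavefunction `ψ = (ρ/(i K)) e^{-iY}` with `Y = -S/hbar`:
`i hbar ψ' = -L ψ - i hbar d ψ`. -/
theorem rqte_wavefunction_evolution
    (hbar : ℝ) (hb : 0 < hbar)
    (ρ K S L d : ℝ → ℝ)
    (hρ : Differentiable ℝ ρ) (hK : Differentiable ℝ K) (hS : Differentiable ℝ S)
    (hL : Continuous L) (hd : Continuous d)
    (hρ' : ∀ τ, deriv ρ τ = 0)
    (hKpos : ∀ τ, 0 < K τ)
    (hinv : ∀ τ, deriv (fun σ => ρ σ / K σ) τ = -(ρ τ / K τ) * d τ)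
    (hS' : ∀ τ, deriv S τ = L τ)
    (Y : ℝ → ℝ) (hY : Y = fun τ => -S τ / hbar)
    (ψ : ℝ → ℂ)
    (hψ : ψ = fun τ => ((ρ τ : ℂ) / (Complex.I * (K τ : ℂ))) * Complex.exp (-Complex.I * (Y τ : ℂ))) :
    ∀ τ, Complex.I * (hbar : ℂ) * deriv ψ τ
      = -(L τ : ℂ) * ψ τ - Complex.I * (hbar : ℂ) * (d τ : ℂ) * ψ τ := by
  intro τ
  have hKne : ∀ σ, K σ ≠ 0 := fun σ => (hKpos σ).ne'
  have hbne : (hbar : ℂ) ≠ 0 := by exact_mod_cast hb.ne'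
  set f : ℝ → ℝ := fun σ => ρ σ / K σ with hfdef
  have hfd : Differentiable ℝ f := hρ.div hK hKne
  have hf' : HasDerivAt f (-(f τ) * d τ) τ := by
    have h := (hfd τ).hasDerivAt
    rwa [show deriv f τ = -(f τ) * d τ from hinv τ] at h
  have hSd : HasDerivAt S (L τ) τ := by
    have := (hS τ).hasDerivAt
    rwa [hS' τ] at this
  have hY' : HasDerivAt Y (-(L τ) / hbar) τ := by
    rw [hY]
    simpa [neg_div] using (hSd.neg.div_const hbar)
  have hYc : HasDerivAt (fun σ => ((Y σ : ℝ) : ℂ)) ((-(L τ) / hbar : ℝ) : ℂ) τ :=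
    hY'.ofReal_comp
  have hexp : HasDerivAt (fun σ => Complex.exp (-Complex.I * (Y σ : ℂ)))
      (Complex.exp (-Complex.I * (Y τ : ℂ)) * (-Complex.I * ((-(L τ) / hbar : ℝ) : ℂ))) τ := by
    have hinner : HasDerivAt (fun σ => -Complex.I * ((Y σ : ℝ) : ℂ))
        (-Complex.I * ((-(L τ) / hbar : ℝ) : ℂ)) τ := hYc.const_mul _
    simpa [mul_comm] using hinner.cexp
  have hfc : HasDerivAt (fun σ => ((f σ : ℝ) : ℂ)) ((-(f τ) * d τ : ℝ) : ℂ) τ :=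
    hf'.ofReal_comp
  have hψeq : ψ = fun σ => ((f σ : ℝ) : ℂ) * Complex.exp (-Complex.I * (Y σ : ℂ)) / Complex.I := by
    rw [hψ]
    funext σ
    have : ((ρ σ : ℂ)) / (Complex.I * (K σ : ℂ)) = ((f σ : ℝ) : ℂ) / Complex.I := by
      have hKc : ((K σ : ℝ) : ℂ) ≠ 0 := by exact_mod_cast hKne σ
      field_simp [hfdef]
      rw [hfdef]; push_cast; field_simp
    rw [this]
    ring
  have hψ' : HasDerivAt ψ
      ((((-(f τ) * d τ : ℝ) : ℂ) * Complex.exp (-Complex.I * (Y τ : ℂ))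
        + ((f τ : ℝ) : ℂ) * (Complex.exp (-Complex.I * (Y τ : ℂ)) * (-Complex.I * ((-(L τ) / hbar : ℝ) : ℂ)))) / Complex.I) τ := by
    rw [hψeq]
    exact (hfc.mul hexp).div_const _
  rw [hψ'.deriv, hψeq]
  simp only
  have hI : Complex.I ≠ 0 := Complex.I_ne_zero
  push_cast
  field_simp
  ring_nf
  rw [Complex.I_sq]
  ring
end

section
/- Suppose ρ, K, S : ℝ → ℝ are differentiable and L, d : ℝ → ℝ are continuous, with: ρ'(τ) = 0 for all τ; ρ(τ)/K(τ) > 0 for all τ; (ρ/K)'(τ) = −(ρ(τ)/K(τ))·d(τ) for all τ; and S'(τ) = L(τ) for all τ. Set Y = −S/ħ and define φ(τ) = (ρ(τ)/K(τ))^{1/2}·e^{−i·Y(τ)}. Then for all τ, i·ħ·φ'(τ) = −L(τ)·φ(τ) − (i·ħ/2)·d(τ)·φ(τ). -/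
/-!
The logarithmic derivative of `A ^ (1/2) e^{-iY}` is half that of `A` minus `i Y'`. With
`A'/A = -d` for `A = ρ/K` and `Y' = -L/ħ`, multiplying by `iħ` gives `-L - iħd/2`.
-/

open Complex

theorem HasDerivAt.rpow_const_of_eq_mul {f : ℝ → ℝ} {c x : ℝ} (p : ℝ)
    (hf : HasDerivAt f (c * f x) x) (hx : 0 < f x) :
    HasDerivAt (fun y => f y ^ p) (p * c * f x ^ p) x := by
  convert hf.rpow_const (p := p) (Or.inl hx.ne') using 1
  rw [Real.rpow_sub_one hx.ne']
  field_simp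

theorem hasDerivAt_rpow_half_mul_exp_neg_I_mul {A Y : ℝ → ℝ} {c y' x : ℝ}
    (hA : HasDerivAt A (c * A x) x) (hpos : 0 < A x) (hY : HasDerivAt Y y' x) :
    HasDerivAt (fun t => ((A t ^ ((1 : ℝ) / 2) : ℝ) : ℂ) * exp (-I * (Y t : ℂ)))
      ((c / 2 - I * y') * (((A x ^ ((1 : ℝ) / 2) : ℝ) : ℂ) * exp (-I * (Y x : ℂ)))) x := by
  have hamp := (hA.rpow_const_of_eq_mul ((1 : ℝ) / 2) hpos).ofReal_comp
  have hphase := (hY.ofReal_comp.const_mul (-I)).cexp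
  exact (hamp.mul hphase).congr_deriv (by push_cast; ring)

theorem rqte_probability_amplitude_evolution_general
    (hbar : ℝ) (hb : 0 < hbar)
    (ρ K S L d : ℝ → ℝ)
    (hρ : Differentiable ℝ ρ) (hK : Differentiable ℝ K) (hS : Differentiable ℝ S)
    (hpos : ∀ τ, 0 < ρ τ / K τ)
    (hinv : ∀ τ, deriv (fun σ => ρ σ / K σ) τ = -(ρ τ / K τ) * d τ)
    (hS' : ∀ τ, deriv S τ = L τ)
    (Y : ℝ → ℝ) (hY : Y = fun τ => -S τ / hbar)
    (φ : ℝ → ℂ)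
    (hφ : φ = fun τ => (((ρ τ / K τ) ^ ((1 : ℝ) / 2) : ℝ) : ℂ) * Complex.exp (-Complex.I * (Y τ : ℂ))) :
    ∀ τ, Complex.I * (hbar : ℂ) * deriv φ τ
      = -(L τ : ℂ) * φ τ - Complex.I * (hbar : ℂ) / 2 * (d τ : ℂ) * φ τ := by
  intro τ
  have hK0 : ∀ σ, K σ ≠ 0 := fun σ h => by simpa [h] using hpos σ
  have hratio : HasDerivAt (fun σ => ρ σ / K σ) (-d τ * (ρ τ / K τ)) τ := by
    rw [neg_mul_comm, mul_comm, ← hinv τ]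
    exact ((hρ.div hK hK0) τ).hasDerivAt
  have hphase : HasDerivAt Y (-L τ / hbar) τ := by
    rw [hY, ← hS' τ]
    exact (hS τ).hasDerivAt.neg.div_const hbar
  rw [hφ, (hasDerivAt_rpow_half_mul_exp_neg_I_mul hratio (hpos τ) hphase).deriv]
  dsimp only
  generalize (((ρ τ / K τ) ^ ((1 : ℝ) / 2) : ℝ) : ℂ) * exp (-I * (Y τ : ℂ)) = Φ
  have hbar0 : (hbar : ℂ) ≠ 0 := ofReal_ne_zero.mpr hb.ne'
  push_cast
  field_simp
  linear_combination (2 * (L τ : ℂ) * Φ) * I_mul_I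

/-- The probability-amplitude wavefunction `φ = (ρ/K)^{1/2} e^{-iY}`
with `Y = -S/hbar` satisfies `i hbar φ' = -L φ - (i hbar/2) d φ`. -/
theorem rqte_probability_amplitude_evolution
    (hbar : ℝ) (hb : 0 < hbar)
    (ρ K S L d : ℝ → ℝ)
    (hρ : Differentiable ℝ ρ) (hK : Differentiable ℝ K) (hS : Differentiable ℝ S)
    (hL : Continuous L) (hd : Continuous d)
    (hρ' : ∀ τ, deriv ρ τ = 0)
    (hpos : ∀ τ, 0 < ρ τ / K τ)
    (hinv : ∀ τ, deriv (fun σ => ρ σ / K σ) τ = -(ρ τ / K τ) * d τ)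
    (hS' : ∀ τ, deriv S τ = L τ)
    (Y : ℝ → ℝ) (hY : Y = fun τ => -S τ / hbar)
    (φ : ℝ → ℂ)
    (hφ : φ = fun τ => (((ρ τ / K τ) ^ ((1 : ℝ) / 2) : ℝ) : ℂ) * Complex.exp (-Complex.I * (Y τ : ℂ))) :
    ∀ τ, Complex.I * (hbar : ℂ) * deriv φ τ
      = -(L τ : ℂ) * φ τ - Complex.I * (hbar : ℂ) / 2 * (d τ : ℂ) * φ τ :=
  rqte_probability_amplitude_evolution_general hbar hb ρ K S L d hρ hK hS hpos hinv hS' Y hY φ hφ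
end

section
/- Let ψ : ℝ³ × ℝ → ℂ be differentiable and suppose the spinor field Ψ(x,t) = u₁·ψ(x,t) satisfies the Dirac equation i·ħ·∂_t Ψ = −i·ħ·c·Σ_{j=1}^{3} α_j ∂_{x_j} Ψ + m·c²·β·Ψ pointwise. Then the scalar amplitude ψ satisfies i·ħ·∂_t ψ = −i·ħ·Σ_{j=1}^{3} v_j ∂_{x_j} ψ + (m·c²/γ)·ψ pointwise, where γ = E/(mc²) and v_j = p_j c²/E. -/
open Matrix

/-- Relativistic energy `E = √(|p|² c² + m² c⁴)`. -/
noncomputable def diracE (c m px py pz : ℝ) : ℝ :=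
  Real.sqrt ((px ^ 2 + py ^ 2 + pz ^ 2) * c ^ 2 + m ^ 2 * c ^ 4)

/-- Normalization constant `n = √((E + mc²)/(2 m c²))`. -/
noncomputable def diracN (c m px py pz : ℝ) : ℝ :=
  Real.sqrt ((diracE c m px py pz + m * c ^ 2) / (2 * m * c ^ 2))

/-- The common denominator `E + mc²` of the lower spinor components. -/
noncomputable def diracDen (c m px py pz : ℝ) : ℂ :=
  ((diracE c m px py pz + m * c ^ 2 : ℝ) : ℂ)

/-- Positive-energy spin-up Dirac spinor `u₁`. -/
noncomputable def diracU1 (c m px py pz : ℝ) : Fin 4 → ℂ :=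
  fun i => (diracN c m px py pz : ℂ) *
    ![1, 0, (pz : ℂ) * (c : ℂ) / diracDen c m px py pz,
      ((px : ℂ) + (py : ℂ) * Complex.I) * (c : ℂ) / diracDen c m px py pz] i

/-- Positive-energy spin-down Dirac spinor `u₂`. -/
noncomputable def diracU2 (c m px py pz : ℝ) : Fin 4 → ℂ :=
  fun i => (diracN c m px py pz : ℂ) *
    ![0, 1, ((px : ℂ) - (py : ℂ) * Complex.I) * (c : ℂ) / diracDen c m px py pz,
      -((pz : ℂ) * (c : ℂ)) / diracDen c m px py pz] i

/-- Negative-energy spin-up Dirac spinor `v₁`. -/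
noncomputable def diracV1 (c m px py pz : ℝ) : Fin 4 → ℂ :=
  fun i => (diracN c m px py pz : ℂ) *
    ![(pz : ℂ) * (c : ℂ) / diracDen c m px py pz,
      ((px : ℂ) + (py : ℂ) * Complex.I) * (c : ℂ) / diracDen c m px py pz, 1, 0] i

/-- Negative-energy spin-down Dirac spinor `v₂`. -/
noncomputable def diracV2 (c m px py pz : ℝ) : Fin 4 → ℂ :=
  fun i => (diracN c m px py pz : ℂ) *
    ![((px : ℂ) - (py : ℂ) * Complex.I) * (c : ℂ) / diracDen c m px py pz,
      -((pz : ℂ) * (c : ℂ)) / diracDen c m px py pz, 0, 1] i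

/-- The Dirac matrix `β = diag(1,1,-1,-1)`. -/
def diracBeta : Matrix (Fin 4) (Fin 4) ℂ :=
  !![1, 0, 0, 0; 0, 1, 0, 0; 0, 0, -1, 0; 0, 0, 0, -1]

/-- The Dirac matrices `α₁, α₂, α₃`. -/
def diracAlpha : Fin 3 → Matrix (Fin 4) (Fin 4) ℂ :=
  ![!![0, 0, 0, 1; 0, 0, 1, 0; 0, 1, 0, 0; 1, 0, 0, 0],
    !![0, 0, 0, -Complex.I; 0, 0, Complex.I, 0; 0, -Complex.I, 0, 0; Complex.I, 0, 0, 0],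
    !![0, 0, 1, 0; 0, 0, 0, -1; 1, 0, 0, 0; 0, -1, 0, 0]]

/-- The sesquilinear form `w^c A w`. -/
noncomputable def diracQF (A : Matrix (Fin 4) (Fin 4) ℂ) (w : Fin 4 → ℂ) : ℂ :=
  dotProduct (star w) (A.mulVec w)

set_option maxHeartbeats 1000000 in
/-- If the spinor field `Ψ(x,t) = u₁ ψ(x,t)` satisfies the Dirac
equation, then the scalar amplitude `ψ` satisfies the first-order transport
equation `i ħ ∂_t ψ = -i ħ Σ_j v_j ∂_{x_j} ψ + (mc²/γ) ψ`. -/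
theorem dirac_u1_scalar_amplitude_equation
    (hbar c m px py pz : ℝ) (hb : 0 < hbar) (hc : 0 < c) (hm : 0 < m)
    (γ : ℝ) (hγ : γ = diracE c m px py pz / (m * c ^ 2))
    (v : Fin 3 → ℝ) (hv : ∀ j, v j = ![px, py, pz] j * c ^ 2 / diracE c m px py pz)
    (ψ : (Fin 3 → ℝ) → ℝ → ℂ)
    (hψ : Differentiable ℝ (fun q : (Fin 3 → ℝ) × ℝ => ψ q.1 q.2))
    (Ψ : (Fin 3 → ℝ) → ℝ → (Fin 4 → ℂ))
    (hΨ : Ψ = fun x t => fun i => diracU1 c m px py pz i * ψ x t)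
    (hDirac : ∀ (x : Fin 3 → ℝ) (t : ℝ),
      (Complex.I * (hbar : ℂ)) • deriv (fun s => Ψ x s) t
        = ∑ j : Fin 3, (-(Complex.I * (hbar : ℂ) * (c : ℂ))) •
            ((diracAlpha j).mulVec (fderiv ℝ (fun y => Ψ y t) x (Pi.single j 1)))
          + (((m * c ^ 2 : ℝ)) : ℂ) • diracBeta.mulVec (Ψ x t)) :
    ∀ (x : Fin 3 → ℝ) (t : ℝ),
      Complex.I * (hbar : ℂ) * deriv (fun s => ψ x s) t
        = -(Complex.I * (hbar : ℂ)) *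
            ∑ j : Fin 3, ((v j : ℝ) : ℂ) * fderiv ℝ (fun y => ψ y t) x (Pi.single j 1)
          + ((m * c ^ 2 / γ : ℝ) : ℂ) * ψ x t := by
  intro x t
  -- differentiability
  have hψt : Differentiable ℝ (fun s => ψ x s) :=
    hψ.comp ((differentiable_const x).prodMk differentiable_id)
  have hψx : Differentiable ℝ (fun y => ψ y t) :=
    hψ.comp (differentiable_id.prodMk (differentiable_const t))
  set a := deriv (fun s => ψ x s) t with ha
  set b : Fin 3 → ℂ := fun j => fderiv ℝ (fun y => ψ y t) x (Pi.single j 1) with hbdef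
  set u := diracU1 c m px py pz with hu
  have hderiv : deriv (fun s => Ψ x s) t = fun i => u i * a := by
    rw [hΨ]
    refine HasDerivAt.deriv ?_
    refine hasDerivAt_pi.2 fun i => ?_
    simpa using ((hψt t).hasDerivAt.const_mul (u i))
  have hfd : ∀ j : Fin 3, fderiv ℝ (fun y => Ψ y t) x (Pi.single j 1)
      = fun i => u i * b j := by
    intro j
    rw [hΨ]
    have : HasFDerivAt (fun y => (fun i => u i * ψ y t))
        (ContinuousLinearMap.pi fun i => u i • fderiv ℝ (fun y => ψ y t) x) x := by
      refine hasFDerivAt_pi.2 fun i => ?_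
      simpa using ((hψx x).hasFDerivAt.const_mul (u i))
    rw [this.fderiv]
    rfl
  have H := hDirac x t
  rw [hderiv] at H
  simp only [hfd] at H
  have h0 := congrFun H 0
  have h2 := congrFun H 2
  have h3 := congrFun H 3
  simp [diracAlpha, diracBeta, Matrix.mulVec, dotProduct, Fin.sum_univ_three,
    Fin.sum_univ_four, hΨ, hu, diracU1, Pi.add_apply, Pi.smul_apply, smul_eq_mul]
    at h0 h2 h3
  set En := diracE c m px py pz with hEn
  have hEpos : 0 < En := by
    rw [hEn, diracE]
    positivity
  have hE2 : (En:ℂ)^2 = ((px:ℂ)^2+py^2+pz^2)*c^2+m^2*c^4 := by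
    have h : En^2 = (px^2+py^2+pz^2)*c^2+m^2*c^4 := Real.sq_sqrt (by positivity)
    calc (En:ℂ)^2 = ((En^2 :ℝ):ℂ) := by push_cast; ring
    _ = _ := by rw [h]; push_cast; ring
  set nn := diracN c m px py pz with hnn
  have hnpos : 0 < nn := by
    rw [hnn, diracN]
    apply Real.sqrt_pos.2
    have : 0 < En + m*c^2 := by positivity
    positivity
  have hden : diracDen c m px py pz = ((En:ℂ)+m*c^2) := by
    rw [diracDen]; push_cast; ring
  rw [hden] at h0 h2 h3
  have hD0 : ((En:ℂ)+m*c^2) ≠ 0 := by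
    have h : ((En:ℂ)+m*c^2) = (((En + m*c^2 :ℝ)):ℂ) := by push_cast; ring
    rw [h]
    exact Complex.ofReal_ne_zero.2 (by positivity)
  have hn0 : ((nn:ℝ):ℂ) ≠ 0 := by
    simpa using Complex.ofReal_ne_zero.2 (ne_of_gt hnpos)
  have hE0 : ((En:ℝ):ℂ) ≠ 0 := by
    simpa using Complex.ofReal_ne_zero.2 (ne_of_gt hEpos)
  have hc0 : ((c:ℝ):ℂ) ≠ 0 := by
    simpa using Complex.ofReal_ne_zero.2 (ne_of_gt hc)
  have hm0 : ((m:ℝ):ℂ) ≠ 0 := by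
    simpa using Complex.ofReal_ne_zero.2 (ne_of_gt hm)
  field_simp [hD0] at h0 h2 h3
  set P := ψ x t with hP
  set D : ℂ := (En:ℂ) + m*c^2 with hD
  have hD1 : (En:ℂ) + c^2*m ≠ 0 := by rw [mul_comm]; exact hD0
  have e0 : Complex.I*(hbar:ℂ)*D*a
      = -(Complex.I*hbar*c^2)*(((px:ℂ)+py*Complex.I)*b 0
          - Complex.I*((px:ℂ)+py*Complex.I)*b 1 + pz*b 2) + m*c^2*D*P := by
    refine mul_left_cancel₀ (mul_ne_zero hn0 hD0) ?_
    linear_combination (norm := skip) (nn*D^2)*h0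
    rw [hD]
    field_simp [show (En:ℂ) + m*c^2 ≠ 0 from hD0]
    ring
  have e2 : Complex.I*(hbar:ℂ)*(pz*c)*a
      = -(Complex.I*hbar*c*D)*b 2 - m*c^2*(pz*c)*P := by
    refine mul_left_cancel₀ hn0 ?_
    linear_combination (norm := skip) (nn*c*D)*h2
    rw [hD]
    field_simp
    ring
  have e3 : Complex.I*(hbar:ℂ)*(((px:ℂ)+py*Complex.I)*c)*a
      = -(Complex.I*hbar*c*D)*(b 0 + Complex.I*b 1)
          - m*c^2*(((px:ℂ)+py*Complex.I)*c)*P := by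
    refine mul_left_cancel₀ hn0 ?_
    linear_combination (norm := skip) (nn*c*D)*h3
    rw [hD]
    field_simp
    ring
  rw [hD] at e0 e2 e3
  have main : (En:ℂ)*(Complex.I*hbar*a)
      = -(Complex.I*hbar*c^2)*((px:ℂ)*b 0+py*b 1+pz*b 2) + m^2*c^4*P := by
    refine mul_left_cancel₀ hD0 ?_
    linear_combination (((En:ℂ)+m*c^2)/2)*e0 + (c*(pz:ℂ)/2)*e2
      + (c*((px:ℂ)-py*Complex.I)/2)*e3
      + ((Complex.I*hbar*a + m*c^2*P)/2)*hE2
      + (Complex.I*hbar*a*c^2*py^2/2 + Complex.I*hbar*c^2*((En:ℂ)+m*c^2)*py*b 1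
          + m*c^4*py^2*P/2)*Complex.I_sq
  have hγ' : ((m * c ^ 2 / γ : ℝ) : ℂ) = m^2*c^4/En := by
    rw [hγ]
    have hγpos : (0:ℝ) < En / (m*c^2) := by positivity
    push_cast
    rw [div_div_eq_mul_div]
    field_simp
  rw [hγ', Fin.sum_univ_three]
  simp only [hv]
  push_cast
  field_simp [hE0]
  linear_combination main
end

section
/- Let ψ : ℝ³ × ℝ → ℂ be differentiable and suppose the spinor field Ψ(x,t) = v₁·ψ(x,t) satisfies the Dirac equation i·ħ·∂_t Ψ = −i·ħ·c·Σ_{j=1}^{3} α_j ∂_{x_j} Ψ + m·c²·β·Ψ pointwise. Then the scalar amplitude ψ satisfies i·ħ·∂_t ψ = −i·ħ·Σ_{j=1}^{3} v_j ∂_{x_j} ψ − (m·c²/γ)·ψ pointwise, where γ = E/(mc²) and v_j = p_j c²/E; i.e., the negative-energy spinor yields the same transport equation with Lagrangian term of opposite sign. -/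
open Matrix

set_option maxHeartbeats 2000000 in
/-- If the spinor field `Ψ(x,t) = v₁ ψ(x,t)` satisfies the Dirac
equation, then the scalar amplitude `ψ` satisfies the transport equation with
the Lagrangian term of opposite sign:
`i ħ ∂_t ψ = -i ħ Σ_j v_j ∂_{x_j} ψ - (mc²/γ) ψ`. -/
theorem dirac_v1_scalar_amplitude_equation
    (hbar c m px py pz : ℝ) (hb : 0 < hbar) (hc : 0 < c) (hm : 0 < m)
    (γ : ℝ) (hγ : γ = diracE c m px py pz / (m * c ^ 2))
    (v : Fin 3 → ℝ) (hv : ∀ j, v j = ![px, py, pz] j * c ^ 2 / diracE c m px py pz)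
    (ψ : (Fin 3 → ℝ) → ℝ → ℂ)
    (hψ : Differentiable ℝ (fun q : (Fin 3 → ℝ) × ℝ => ψ q.1 q.2))
    (Ψ : (Fin 3 → ℝ) → ℝ → (Fin 4 → ℂ))
    (hΨ : Ψ = fun x t => fun i => diracV1 c m px py pz i * ψ x t)
    (hDirac : ∀ (x : Fin 3 → ℝ) (t : ℝ),
      (Complex.I * (hbar : ℂ)) • deriv (fun s => Ψ x s) t
        = ∑ j : Fin 3, (-(Complex.I * (hbar : ℂ) * (c : ℂ))) •
            ((diracAlpha j).mulVec (fderiv ℝ (fun y => Ψ y t) x (Pi.single j 1)))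
          + (((m * c ^ 2 : ℝ)) : ℂ) • diracBeta.mulVec (Ψ x t)) :
    ∀ (x : Fin 3 → ℝ) (t : ℝ),
      Complex.I * (hbar : ℂ) * deriv (fun s => ψ x s) t
        = -(Complex.I * (hbar : ℂ)) *
            ∑ j : Fin 3, ((v j : ℝ) : ℂ) * fderiv ℝ (fun y => ψ y t) x (Pi.single j 1)
          - ((m * c ^ 2 / γ : ℝ) : ℂ) * ψ x t := by
  intro x t
  subst hΨ
  have hEpos : 0 < diracE c m px py pz := by
    apply Real.sqrt_pos.2
    have : 0 < m ^ 2 * c ^ 4 := by positivity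
    nlinarith [sq_nonneg px, sq_nonneg py, sq_nonneg pz]
  have hE2 : (diracE c m px py pz) ^ 2 = (px ^ 2 + py ^ 2 + pz ^ 2) * c ^ 2 + m ^ 2 * c ^ 4 := by
    apply Real.sq_sqrt
    have : 0 < m ^ 2 * c ^ 4 := by positivity
    nlinarith [sq_nonneg px, sq_nonneg py, sq_nonneg pz]
  set E := diracE c m px py pz with hEdef
  set V : Fin 4 → ℂ := diracV1 c m px py pz with hV
  -- differentiability in each slot
  have hψt : DifferentiableAt ℝ (fun s => ψ x s) t :=
    (hψ (x, t)).comp t ((differentiableAt_const x).prodMk differentiableAt_id)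
  have hψx : DifferentiableAt ℝ (fun y => ψ y t) x :=
    (hψ (x, t)).comp (f := fun y : Fin 3 → ℝ => (y, t)) x
      (differentiableAt_fun_id.prodMk (differentiableAt_const t))
  set Dt : ℂ := deriv (fun s => ψ x s) t with hDt
  set L := fderiv ℝ (fun y => ψ y t) x with hL
  have hdt : deriv (fun s => fun i => V i * ψ x s) t = fun i => V i * Dt := by
    refine HasDerivAt.deriv ?_
    exact hasDerivAt_pi.2 fun i => (hψt.hasDerivAt).const_mul (V i)
  have hfd : fderiv ℝ (fun y => fun i => V i * ψ y t) x
      = ContinuousLinearMap.pi (fun i => V i • L) := by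
    refine HasFDerivAt.fderiv ?_
    exact hasFDerivAt_pi.2 fun i => (hψx.hasFDerivAt).const_mul (V i)
  have hD := hDirac x t
  simp only [hdt, hfd] at hD
  have hcomp : ∀ j : Fin 3, (ContinuousLinearMap.pi (fun i => V i • L)) (Pi.single j 1)
      = fun i => V i * L (Pi.single j 1) := by
    intro j; funext i
    simp [ContinuousLinearMap.pi_apply, ContinuousLinearMap.smul_apply, smul_eq_mul]
  simp only [hcomp] at hD
  have h0 := congrFun hD 0
  have h1 := congrFun hD 1
  have h2 := congrFun hD 2
  simp only [hV, diracV1, diracAlpha, diracBeta, diracDen, ← hEdef, Fin.sum_univ_three,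
    Matrix.mulVec, dotProduct, Fin.sum_univ_four, Pi.add_apply, Pi.smul_apply,
    Matrix.cons_val_zero, Matrix.cons_val_one, Matrix.head_cons, Matrix.cons_val',
    Matrix.cons_val_fin_one, Matrix.empty_val', Matrix.head_fin_const,
    Matrix.cons_val_two, Matrix.tail_cons, Matrix.cons_val_three,
    Matrix.of_apply, smul_eq_mul] at h0 h1 h2
  push_cast at h0 h1 h2
  have hDpos : (0:ℝ) < E + m * c ^ 2 := by positivity
  have hDne : ((E:ℂ)) + (m:ℂ) * (c:ℂ) ^ 2 ≠ 0 := by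
    have := Complex.ofReal_ne_zero.2 (ne_of_gt hDpos)
    push_cast at this
    exact this
  have hnpos : (0:ℝ) < diracN c m px py pz := by
    apply Real.sqrt_pos.2
    positivity
  have hEne : ((E:ℝ):ℂ) ≠ 0 := Complex.ofReal_ne_zero.2 (ne_of_gt hEpos)
  set n : ℂ := ((diracN c m px py pz : ℝ) : ℂ) with hn
  have hnne : n ≠ 0 := Complex.ofReal_ne_zero.2 (ne_of_gt hnpos)
  set d1 : ℂ := L (Pi.single 0 1)
  set d2 : ℂ := L (Pi.single 1 1)
  set d3 : ℂ := L (Pi.single 2 1)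
  have hDne' : ((E:ℂ)) + (c:ℂ) ^ 2 * (m:ℂ) ≠ 0 := by rw [mul_comm]; exact hDne
  field_simp at h0 h1 h2
  have hE2' : ((E : ℝ) : ℂ) ^ 2 = ((px : ℂ) ^ 2 + (py : ℂ) ^ 2 + (pz : ℂ) ^ 2) * (c : ℂ) ^ 2
      + (m : ℂ) ^ 2 * (c : ℂ) ^ 4 := by
    exact_mod_cast congrArg (fun r : ℝ => (r : ℂ)) hE2
  set D : ℂ := ((E : ℝ) : ℂ) + (m : ℂ) * (c : ℂ) ^ 2 with hDdef
  have hD2ne : n * (2 * D ^ 2) ≠ 0 :=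
    mul_ne_zero hnne (mul_ne_zero two_ne_zero (pow_ne_zero 2 hDne))
  have hkey : n * (2 * D ^ 2) * (Complex.I * (hbar : ℂ) * Dt * ((E : ℝ) : ℂ))
      = n * (2 * D ^ 2) * (-(Complex.I * (hbar : ℂ) * (c : ℂ) ^ 2) *
          ((px : ℂ) * d1 + (py : ℂ) * d2 + (pz : ℂ) * d3)
        - (m : ℂ) ^ 2 * (c : ℂ) ^ 4 * ψ x t) := by
    linear_combination (n * D * ((pz : ℂ) * (c : ℂ))) * h0
      + (n * D * (((px : ℂ) - (py : ℂ) * Complex.I) * (c : ℂ))) * h1 + (n * D * D) * h2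
      + (n * D * (Complex.I * (hbar : ℂ) * Dt - (m : ℂ) * (c : ℂ) ^ 2 * ψ x t)) * hE2'
      + (n * (c : ℂ) ^ 2 * (py : ℂ) * (-((m : ℂ) * (c : ℂ) ^ 2 * (py : ℂ) * ψ x t * D)
          + Complex.I * (hbar : ℂ) * ((py : ℂ) * Dt * D + 2 * d2 * D ^ 2))) * Complex.I_sq
  have hkey2 := mul_left_cancel₀ hD2ne hkey
  rw [hγ]
  have hγ' : ((m * c ^ 2 / (E / (m * c ^ 2)) : ℝ) : ℂ) = (m : ℂ) ^ 2 * (c : ℂ) ^ 4 / ((E:ℝ) : ℂ) := by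
    rw [div_div_eq_mul_div]
    push_cast
    ring
  rw [hγ']
  simp only [hv, Fin.sum_univ_three, Matrix.cons_val_zero, Matrix.cons_val_one,
    Matrix.head_cons, Matrix.cons_val_two, Matrix.tail_cons]
  push_cast
  rw [div_mul_eq_mul_div, div_mul_eq_mul_div, div_mul_eq_mul_div]
  field_simp
  linear_combination hkey2
end

section
/- Let u ∈ ℝ³ with |u| < c, γ = 1/√(1 − |u|²/c²), A ∈ ℂ with A ≠ 0, k ∈ ℝ³ and ω ∈ ℝ. The plane wave ψ(x,t) = A·exp(i·(k·x − ω·t)) satisfies the free relativistic quantum transfer equation i·ħ·γ·∂_t ψ + i·ħ·γ·(u·∇ψ) = m·c²·ψ at every point of ℝ³ × ℝ if and only if the dispersion relation ħ·ω − ħ·(k·u) = m·c²/γ holds. -/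
open Complex

lemma pw_hasDerivAt (A : ℂ) (S ω : ℝ) (t : ℝ) :
    HasDerivAt (fun s : ℝ => A * Complex.exp (Complex.I * ((S - ω * s : ℝ) : ℂ)))
      (A * Complex.exp (Complex.I * ((S - ω * t : ℝ) : ℂ)) * (Complex.I * (-ω : ℂ))) t := by
  have h1 : HasDerivAt (fun s : ℝ => ((S - ω * s : ℝ) : ℂ)) (-(ω : ℂ)) t := by
    have h0 : HasDerivAt (fun s : ℝ => (s : ℂ)) 1 t := by
      simpa using (hasDerivAt_id t).ofReal_comp
    have h := ((h0.const_mul (ω : ℂ)).const_sub (S : ℂ))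
    simp only [mul_one] at h
    exact h.congr_of_eventuallyEq
      (Filter.Eventually.of_forall fun s => by push_cast; ring)
  have h3 := (h1.const_mul Complex.I).cexp.const_mul A
  exact h3.congr_deriv (by ring)

lemma pw_hasFDerivAt (A : ℂ) (k : Fin 3 → ℝ) (b : ℝ) (x : Fin 3 → ℝ) :
    HasFDerivAt (fun y : Fin 3 → ℝ => A * Complex.exp (Complex.I * (((∑ j, k j * y j) - b : ℝ) : ℂ)))
      ((A * Complex.exp (Complex.I * (((∑ j, k j * x j) - b : ℝ) : ℂ)) * Complex.I) •
        (Complex.ofRealCLM.comp (∑ j, k j • ContinuousLinearMap.proj j))) x := by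
  set L : (Fin 3 → ℝ) →L[ℝ] ℝ := ∑ j, k j • ContinuousLinearMap.proj j with hL
  have hLy : ∀ y : Fin 3 → ℝ, L y = ∑ j, k j * y j := by
    intro y
    simp [hL, ContinuousLinearMap.sum_apply, ContinuousLinearMap.proj_apply, smul_eq_mul]
  have h1 : HasFDerivAt (fun y : Fin 3 → ℝ => (((∑ j, k j * y j) - b : ℝ) : ℂ))
      (Complex.ofRealCLM.comp L) x := by
    have h0 : HasFDerivAt (fun y : Fin 3 → ℝ => ((Complex.ofRealCLM.comp L) y - (b : ℂ)))
        (Complex.ofRealCLM.comp L) x := ((Complex.ofRealCLM.comp L).hasFDerivAt).sub_const _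
    refine h0.congr_of_eventuallyEq (Filter.Eventually.of_forall fun y => ?_)
    simp [hLy y]
  have h4 := ((h1.const_mul Complex.I).cexp).const_mul A
  exact h4.congr_fderiv (by rw [smul_smul, smul_smul])

lemma pw_fderiv_single (A : ℂ) (k : Fin 3 → ℝ) (b : ℝ) (x : Fin 3 → ℝ) (j : Fin 3) :
    fderiv ℝ (fun y : Fin 3 → ℝ => A * Complex.exp (Complex.I * (((∑ j, k j * y j) - b : ℝ) : ℂ))) x
        (Pi.single j 1)
      = A * Complex.exp (Complex.I * (((∑ j, k j * x j) - b : ℝ) : ℂ)) * (Complex.I * (k j : ℂ)) := by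
  rw [(pw_hasFDerivAt A k b x).fderiv]
  simp [ContinuousLinearMap.sum_apply, ContinuousLinearMap.proj_apply, smul_eq_mul,
    Pi.single_apply, Finset.sum_ite_eq']
  ring

/-- The plane wave `ψ(x,t) = A exp(i(k·x - ω t))` satisfies the
free relativistic quantum transfer equation
`i ħ γ ∂_t ψ + i ħ γ (u·∇ψ) = m c² ψ` everywhere if and only if the dispersion
relation `ħ ω - ħ (k·u) = m c²/γ` holds. -/
theorem plane_wave_dispersion_relation
    (hbar c m : ℝ) (hb : 0 < hbar) (hc : 0 < c) (hm : 0 < m)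
    (u : Fin 3 → ℝ) (hu : Real.sqrt (∑ j, u j ^ 2) < c)
    (γ : ℝ) (hγ : γ = 1 / Real.sqrt (1 - (∑ j, u j ^ 2) / c ^ 2))
    (A : ℂ) (hA : A ≠ 0) (k : Fin 3 → ℝ) (ω : ℝ)
    (ψ : (Fin 3 → ℝ) → ℝ → ℂ)
    (hψ : ψ = fun x t => A * Complex.exp (Complex.I * (((∑ j, k j * x j) - ω * t : ℝ) : ℂ))) :
    (∀ (x : Fin 3 → ℝ) (t : ℝ),
      Complex.I * (hbar : ℂ) * (γ : ℂ) * deriv (fun s => ψ x s) t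
        + Complex.I * (hbar : ℂ) * (γ : ℂ) *
            ∑ j : Fin 3, ((u j : ℝ) : ℂ) * fderiv ℝ (fun y => ψ y t) x (Pi.single j 1)
        = ((m * c ^ 2 : ℝ) : ℂ) * ψ x t)
    ↔ hbar * ω - hbar * (∑ j, k j * u j) = m * c ^ 2 / γ := by
  have husq : (0:ℝ) ≤ ∑ j, u j ^ 2 := Finset.sum_nonneg fun j _ => sq_nonneg _
  have hlt : (∑ j, u j ^ 2) < c ^ 2 := by
    nlinarith [Real.sq_sqrt husq, Real.sqrt_nonneg (∑ j, u j ^ 2)]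
  have h1 : (0:ℝ) < 1 - (∑ j, u j ^ 2) / c ^ 2 := by
    rw [sub_pos, div_lt_one (by positivity)]; exact hlt
  have hsq : (0:ℝ) < Real.sqrt (1 - (∑ j, u j ^ 2) / c ^ 2) := Real.sqrt_pos.mpr h1
  have hγpos : 0 < γ := by rw [hγ]; positivity
  have hγne : (γ:ℝ) ≠ 0 := ne_of_gt hγpos
  subst hψ
  have key : ∀ (x : Fin 3 → ℝ) (t : ℝ),
      (Complex.I * (hbar : ℂ) * (γ : ℂ) *
          deriv (fun s => A * Complex.exp (Complex.I * (((∑ j, k j * x j) - ω * s : ℝ) : ℂ))) t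
        + Complex.I * (hbar : ℂ) * (γ : ℂ) *
            ∑ j : Fin 3, ((u j : ℝ) : ℂ) *
              fderiv ℝ (fun y => A * Complex.exp (Complex.I * (((∑ j, k j * y j) - ω * t : ℝ) : ℂ)))
                x (Pi.single j 1)
        = ((m * c ^ 2 : ℝ) : ℂ) * (A * Complex.exp (Complex.I * (((∑ j, k j * x j) - ω * t : ℝ) : ℂ))))
      ↔ hbar * γ * (ω - ∑ j, k j * u j) = m * c ^ 2 := by
    intro x t
    set E : ℂ := A * Complex.exp (Complex.I * (((∑ j, k j * x j) - ω * t : ℝ) : ℂ)) with hE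
    have hEne : E ≠ 0 := mul_ne_zero hA (Complex.exp_ne_zero _)
    rw [(pw_hasDerivAt A _ ω t).deriv]
    simp only [pw_fderiv_single A k (ω * t) x]
    rw [← hE]
    have lhs_eq : Complex.I * (hbar : ℂ) * (γ : ℂ) * (E * (Complex.I * (-(ω:ℂ))))
        + Complex.I * (hbar : ℂ) * (γ : ℂ) * ∑ j : Fin 3, ((u j : ℝ) : ℂ) * (E * (Complex.I * (k j : ℂ)))
        = ((hbar * γ * (ω - ∑ j, k j * u j) : ℝ) : ℂ) * E := by
      have hs : ∑ j : Fin 3, ((u j : ℝ):ℂ) * (E * (Complex.I * (k j : ℂ)))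
          = (∑ j : Fin 3, ((k j:ℂ) * (u j:ℂ))) * E * Complex.I := by
        rw [Finset.sum_mul, Finset.sum_mul]
        exact Finset.sum_congr rfl fun j _ => by ring
      rw [hs]
      push_cast
      linear_combination ((hbar:ℂ) * γ * (∑ j : Fin 3, (k j:ℂ) * (u j:ℂ)) * E
        - (hbar:ℂ) * γ * ω * E) * Complex.I_mul_I
    rw [lhs_eq, mul_comm ((m * c ^ 2 : ℝ) : ℂ) E, mul_comm _ E]
    rw [mul_right_inj' hEne]
    exact Complex.ofReal_inj
  constructor
  · intro h
    have h0 := (key 0 0).mp (h 0 0)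
    rw [eq_div_iff hγne]
    linear_combination h0
  · intro h x t
    refine (key x t).mpr ?_
    rw [eq_div_iff hγne] at h
    linear_combination h
end

section
/- Let m, k, x₀, ħ, ω > 0 with ω = √(k/m), let T = 2π/ω, let λ ∈ ℝ, and define L : ℝ → ℝ by L(t) = (1/2)·m·(x₀·ω·sin(ωt))² − (1/2)·k·(x₀·cos(ωt))² − (1/2)·ħ·ω (the classical harmonic-oscillator Lagrangian along the trajectory minus the rest-energy term (1/2)mc² under the identification m·c² = ħ·ω). Suppose ψ : ℝ → ℂ is differentiable, satisfies i·ħ·ψ'(t) = (λ + L(t))·ψ(t) for all t, is periodic with ψ(T) = ψ(0), and ψ(0) ≠ 0. Then there exists an integer n such that λ = ħ·ω·(n + 1/2); i.e., the admissible eigenvalues are exactly the quantum harmonic-oscillator energies including the zero-point energy ħω/2. -/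
/-- For the harmonic oscillator, a nontrivial periodic solution of
`i ħ ψ' = (λ + L(t)) ψ` (with `L` the classical Lagrangian along the trajectory
minus the rest-energy term `(1/2) ħ ω`) forces the eigenvalue quantization
`λ = ħ ω (n + 1/2)` for some integer `n`. -/
theorem harmonic_oscillator_spectrum
    (m k x₀ hbar ω : ℝ) (hm : 0 < m) (hk : 0 < k) (hx₀ : 0 < x₀) (hb : 0 < hbar)
    (hω : 0 < ω) (hωdef : ω = Real.sqrt (k / m))
    (T : ℝ) (hT : T = 2 * Real.pi / ω)
    (lam : ℝ)
    (L : ℝ → ℝ)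
    (hL : L = fun t => (1 / 2) * m * (x₀ * ω * Real.sin (ω * t)) ^ 2
      - (1 / 2) * k * (x₀ * Real.cos (ω * t)) ^ 2 - (1 / 2) * hbar * ω)
    (ψ : ℝ → ℂ) (hψ : Differentiable ℝ ψ)
    (hODE : ∀ t, Complex.I * (hbar : ℂ) * deriv ψ t = ((lam + L t : ℝ) : ℂ) * ψ t)
    (hper : ψ T = ψ 0) (h0 : ψ 0 ≠ 0) :
    ∃ n : ℤ, lam = hbar * ω * (n + 1 / 2) := by
  have hωne : ω ≠ 0 := ne_of_gt hω
  have hbne : (hbar:ℝ) ≠ 0 := ne_of_gt hb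
  have hk' : k = m * ω ^ 2 := by
    have h1 : ω ^ 2 = k / m := by
      rw [hωdef, Real.sq_sqrt]
      positivity
    field_simp at h1
    linarith
  set g : ℝ → ℝ := fun t => (lam - hbar * ω / 2) * t
      - (m * x₀ ^ 2 * ω / 4) * Real.sin (2 * ω * t) with hg
  have hgderiv : ∀ t, HasDerivAt g (lam + L t) t := by
    intro t
    have h1 : HasDerivAt (fun t : ℝ => (lam - hbar * ω / 2) * t)
        (lam - hbar * ω / 2) t := by
      simpa using (hasDerivAt_id t).const_mul (lam - hbar * ω / 2)
    have hin : HasDerivAt (fun t : ℝ => 2 * ω * t) (2 * ω) t := by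
      simpa using (hasDerivAt_id t).const_mul (2 * ω)
    have hsin : HasDerivAt (fun t : ℝ => Real.sin (2 * ω * t))
        (Real.cos (2 * ω * t) * (2 * ω)) t := (Real.hasDerivAt_sin _).comp t hin
    have := h1.sub (hsin.const_mul (m * x₀ ^ 2 * ω / 4))
    convert this using 1
    case e'_4 => exact rfl
    case e'_5 => exact rfl
    case e'_8 => exact rfl
    rw [hL, hk']
    have hc : Real.cos (2 * (ω * t)) = Real.cos (ω * t) ^ 2 - Real.sin (ω * t) ^ 2 :=
      Real.cos_two_mul' (ω * t)
    rw [show 2 * ω * t = 2 * (ω * t) by ring]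
    linear_combination (m * x₀ ^ 2 * ω ^ 2 / 2) * hc
  set u : ℝ → ℂ := fun t => ψ t * Complex.exp (Complex.I * g t / hbar) with hu
  have hIb : (Complex.I * (hbar:ℂ)) ≠ 0 :=
    mul_ne_zero Complex.I_ne_zero (by exact_mod_cast hbne)
  have hu' : ∀ t, HasDerivAt u 0 t := by
    intro t
    have hgc : HasDerivAt (fun t => ((g t : ℝ) : ℂ)) ((lam + L t : ℝ) : ℂ) t :=
      (hgderiv t).ofReal_comp
    have he : HasDerivAt (fun t => Complex.exp (Complex.I * g t / hbar))
        (Complex.exp (Complex.I * g t / hbar) * (Complex.I * ((lam + L t : ℝ):ℂ) / hbar)) t :=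
      ((hgc.const_mul Complex.I).div_const (hbar:ℂ)).cexp
    have hψt : HasDerivAt ψ (deriv ψ t) t := (hψ t).hasDerivAt
    have total := hψt.mul he
    have hd : deriv ψ t = ((lam + L t : ℝ) : ℂ) * ψ t / (Complex.I * hbar) := by
      rw [← hODE t]
      field_simp
      exact (mul_div_cancel_right₀ _ (by exact_mod_cast hbne)).symm
    convert total using 1
    case e'_4 => exact rfl
    case e'_8 => exact rfl
    rw [hd]
    have hIne : (Complex.I:ℂ) ≠ 0 := Complex.I_ne_zero
    have hbc : ((hbar:ℝ):ℂ) ≠ 0 := by exact_mod_cast hbne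
    field_simp
    ring_nf
    rw [Complex.I_sq]
    ring
  have hconst : u T = u 0 :=
    is_const_of_deriv_eq_zero (fun t => (hu' t).differentiableAt)
      (fun t => (hu' t).deriv) T 0
  have hg0 : g 0 = 0 := by simp [hg]
  have hexp1 : Complex.exp (Complex.I * g T / hbar) = 1 := by
    have h1 : ψ T * Complex.exp (Complex.I * g T / hbar)
        = ψ 0 * Complex.exp (Complex.I * g 0 / hbar) := hconst
    rw [hper, hg0] at h1
    have h2 : ψ 0 * Complex.exp (Complex.I * g T / hbar) = ψ 0 * 1 := by
      simpa using h1
    exact mul_left_cancel₀ h0 h2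
  obtain ⟨n, hn⟩ := Complex.exp_eq_one_iff.mp hexp1
  refine ⟨n, ?_⟩
  -- extract real equation g T = n * (2 * π) * hbar
  have hgT : (g T : ℝ) = n * (2 * Real.pi) * hbar := by
    have h2 : (Complex.I : ℂ) * (g T / hbar) = Complex.I * (n * (2 * Real.pi)) := by
      rw [mul_div_assoc] at hn
      rw [hn]; ring
    have h3 : ((g T / hbar : ℝ) : ℂ) = ((n * (2 * Real.pi) : ℝ) : ℂ) := by
      have := mul_left_cancel₀ Complex.I_ne_zero h2
      push_cast
      push_cast at this
      exact this
    have h4 : g T / hbar = n * (2 * Real.pi) := by exact_mod_cast h3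
    field_simp at h4
    linarith
  -- compute g T
  have hsinT : Real.sin (2 * ω * T) = 0 := by
    rw [hT, show 2 * ω * (2 * Real.pi / ω) = (4:ℤ) * Real.pi by field_simp; ring]
    exact Real.sin_int_mul_pi 4
  rw [hg] at hgT
  simp only [hsinT, mul_zero, sub_zero] at hgT
  rw [hT] at hgT
  have hπ : Real.pi ≠ 0 := Real.pi_ne_zero
  field_simp at hgT
  -- hgT : (lam - hbar*ω/2) * (2π) = n * 2π * hbar * ω (roughly)
  have h2π : (0:ℝ) < 2 * Real.pi := by positivity
  nlinarith [hgT, Real.pi_pos]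
end

section
/- Let ħ, v, l > 0 and λ, L ∈ ℝ (L the constant Lagrangian (1/2)mv² of the particle between the walls). Suppose ψ : ℝ → ℂ is differentiable, satisfies the eigenvalue equation i·ħ·v·ψ'(x) = (λ − L)·ψ(x) for all x, ψ(0) ≠ 0, and satisfies the reflection boundary condition ψ(l) = ψ(0) or ψ(l) = −ψ(0). Then there exists an integer n such that (λ − L)·l/(ħ·v) = n·π, i.e. λ = L + n·π·ħ·v/l. -/
/-- For the particle in a box of length `l`, a nontrivial solution
of the eigenvalue equation `i ħ v ψ' = (λ - L) ψ` satisfying the reflection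
boundary condition `ψ(l) = ±ψ(0)` forces `(λ - L) l/(ħ v) = n π`, i.e.
`λ = L + n π ħ v / l`, for some integer `n`. -/
theorem particle_in_box_spectrum
    (hbar v l : ℝ) (hb : 0 < hbar) (hv : 0 < v) (hl : 0 < l)
    (lam L : ℝ)
    (ψ : ℝ → ℂ) (hψ : Differentiable ℝ ψ)
    (hODE : ∀ x, Complex.I * (hbar : ℂ) * (v : ℂ) * deriv ψ x = ((lam - L : ℝ) : ℂ) * ψ x)
    (h0 : ψ 0 ≠ 0)
    (hbc : ψ l = ψ 0 ∨ ψ l = -ψ 0) :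
    ∃ n : ℤ, (lam - L) * l / (hbar * v) = n * Real.pi
      ∧ lam = L + n * Real.pi * hbar * v / l := by
  have hbv' : hbar * v ≠ 0 := (mul_pos hb hv).ne'
  set k : ℝ := (lam - L) / (hbar * v) with hk
  have hbv : (hbar : ℂ) * (v : ℂ) ≠ 0 := by
    simp [Complex.ext_iff, hb.ne', hv.ne']
  have hkc : ((lam - L : ℝ) : ℂ) = (k : ℂ) * ((hbar : ℂ) * (v : ℂ)) := by
    push_cast [hk]
    field_simp
    rw [mul_assoc, mul_div_assoc, div_self hbv, mul_one]
  have hderiv : ∀ x, deriv ψ x = (-Complex.I * (k : ℂ)) * ψ x := by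
    intro x
    have h := hODE x
    rw [hkc] at h
    have hIbv : Complex.I * ((hbar : ℂ) * (v : ℂ)) ≠ 0 :=
      mul_ne_zero Complex.I_ne_zero hbv
    have h2 : Complex.I * ((hbar : ℂ) * (v : ℂ)) * deriv ψ x
        = Complex.I * ((hbar : ℂ) * (v : ℂ)) * ((-Complex.I * (k : ℂ)) * ψ x) := by
      linear_combination h + ((k : ℂ) * (hbar : ℂ) * (v : ℂ) * ψ x) * Complex.I_sq
    exact mul_left_cancel₀ hIbv h2
  -- define f x = ψ x * exp (I k x); it's constant
  set f : ℝ → ℂ := fun x => ψ x * Complex.exp (Complex.I * k * x) with hf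
  have hfd : ∀ x : ℝ, HasDerivAt f 0 x := by
    intro x
    have h1 : HasDerivAt ψ ((-Complex.I * (k : ℂ)) * ψ x) x := by
      rw [← hderiv x]; exact (hψ x).hasDerivAt
    have h2 : HasDerivAt (fun y : ℝ => Complex.exp (Complex.I * k * y))
        (Complex.I * k * Complex.exp (Complex.I * k * x)) x := by
      have : HasDerivAt (fun y : ℝ => Complex.I * k * (y : ℂ)) (Complex.I * k) x := by
        simpa using (Complex.ofRealCLM.hasDerivAt (x := x)).const_mul (Complex.I * (k:ℂ))
      simpa [mul_comm] using this.cexp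
    have := h1.mul h2
    convert this using 1
    · rfl
    · rfl
    · ring
  have hconst : ∀ x : ℝ, f x = f 0 := by
    intro x
    exact is_const_of_deriv_eq_zero (fun y => (hfd y).differentiableAt)
      (fun y => (hfd y).deriv) x 0
  have hfl := hconst l
  have hexp : ψ l * Complex.exp (Complex.I * k * l) = ψ 0 := by
    simpa [hf] using hfl
  -- exp(I k l) = ±1
  have hsq : Complex.exp (Complex.I * k * l) ^ 2 = 1 := by
    rcases hbc with h | h <;> rw [h] at hexp
    · have he1 : ψ 0 * Complex.exp (Complex.I * k * l) = ψ 0 * 1 := by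
        linear_combination hexp
      rw [mul_left_cancel₀ h0 he1]; ring
    · have he1 : ψ 0 * Complex.exp (Complex.I * k * l) = ψ 0 * (-1) := by
        linear_combination -hexp
      rw [mul_left_cancel₀ h0 he1]; ring
  have hone : Complex.exp (2 * (Complex.I * k * l)) = 1 := by
    rw [two_mul, Complex.exp_add, ← sq, hsq]
  rw [Complex.exp_eq_one_iff] at hone
  obtain ⟨n, hn⟩ := hone
  have him := congrArg Complex.im hn
  simp [Complex.mul_im, Complex.mul_re] at him
  have hkl : k * l = n * Real.pi := by nlinarith [him]
  refine ⟨n, ?_, ?_⟩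
  · calc (lam - L) * l / (hbar * v) = k * l := by rw [hk]; ring
    _ = n * Real.pi := hkl
  · rw [hk] at hkl
    rw [div_mul_eq_mul_div, div_eq_iff hbv'] at hkl
    field_simp
    linear_combination hkl
end
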